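/- arXiv:1309.5332 — 12 statements merged into one kernel-verified Lean document; each statement's English description precedes it below -/
import Mathlib

section
/- Let V and W be finite-dimensional real vector spaces equipped with nondegenerate symmetric bilinear forms g_V and g_W, let k be a natural number, and for each ℓ ∈ {0,…,k} let A_ℓ be a multilinear map V^{ℓ+4} → ℝ, B_ℓ a multilinear map W^{ℓ+4} → ℝ, R_ℓ a multilinear map V^{ℓ+2} → End(V), and S_ℓ a multilinear map W^{ℓ+2} → End(W), satisfying the compatibility identities g_V(R_ℓ(x₁,x₂,x₅,…,x_{ℓ+4})x₃, x₄) = A_ℓ(x₁,x₂,x₃,x₄,x₅,…,x_{ℓ+4}) for all x_i ∈ V and g_W(S_ℓ(y₁,y₂,y₅,…,y_{ℓ+4})y₃, y₄) = B_ℓ(y₁,y₂,y₃,y₄,y₅,…,y_{ℓ+4}) for all y_i ∈ W. Then the following are equivalent: (1) there exist λ > 0 and a linear bijection φ : V → W such that g_W(φx, φy) = λ²·g_V(x,y) for all x,y ∈ V and φ(R_ℓ(x₁,x₂,x₅,…,x_{ℓ+4})x₃) = S_ℓ(φx₁,φx₂,φx₅,…,φx_{ℓ+4})(φx₃) for all 0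 ≤ ℓ ≤ k and all x_i ∈ V; (2) there exist a real number μ ≠ 0 and a linear bijection Φ : V → W such that g_W(Φx, Φy) = g_V(x,y) for all x,y ∈ V and B_ℓ(Φx₁,…,Φx_{ℓ+4}) = μ^{−ℓ−2}·A_ℓ(x₁,…,x_{ℓ+4}) for all 0 ≤ ℓ ≤ k and all x_i ∈ V. -/
/-!
Scaling a linear map by `t ≠ 0` multiplies the pulled-back metric by `t²` and the pulled-back
`(ℓ + 4)`-linear tensor `B_ℓ` by `t ^ (ℓ + 4)`, so `λ⁻¹ φ` and `μ Φ` pass between the two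
conditions. A map scaling the metric by `c` intertwines `R_ℓ` with `S_ℓ` iff it pulls `B_ℓ`
back to `c A_ℓ`, because `A_ℓ, B_ℓ` are `R_ℓ, S_ℓ` with an index lowered by the metric; the
converse direction uses that `g_W` is nondegenerate and the map is onto.
-/

/-- Given a tuple `x` of `ℓ+4` vectors, select the `ℓ+2` vectors
`x₁, x₂, x₅, …, x_{ℓ+4}` (in 0-based indexing: entries `0, 1, 4, 5, …, ℓ+3`). -/
def curvSel {V : Type*} {ℓ : ℕ} (x : Fin (ℓ + 4) → V) (i : Fin (ℓ + 2)) : V :=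
  if h : (i : ℕ) < 2 then x ⟨(i : ℕ), by omega⟩
  else x ⟨(i : ℕ) + 2, by have := i.isLt; omega⟩

section CurvSel

variable {V : Type*} {ℓ : ℕ}

lemma curvSel_comp {W : Type*} (f : V → W) (x : Fin (ℓ + 4) → V) :
    curvSel (fun i => f (x i)) = fun i => f (curvSel x i) := by
  funext i
  exact (apply_dite f _ _ _).symm

lemma exists_curvSel_eq (y : Fin (ℓ + 2) → V) (a b : V) :
    ∃ x : Fin (ℓ + 4) → V, curvSel x = y ∧ x 2 = a ∧ x 3 = b := by
  refine ⟨fun i => if h : (i : ℕ) < 2 then y ⟨i, by omega⟩ else if (i : ℕ) = 2 then a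
    else if (i : ℕ) = 3 then b else y ⟨i - 2, by omega⟩, ?_, ?_, ?_⟩
  · funext i
    unfold curvSel
    dsimp only
    split_ifs <;> first | rfl | omega
  · simp [Nat.mod_eq_of_lt (show 2 < ℓ + 4 by omega)]
  · simp [Nat.mod_eq_of_lt (show 3 < ℓ + 4 by omega)]

end CurvSel

section Transfer

variable {𝕜 V W : Type*} [CommRing 𝕜] [AddCommGroup V] [Module 𝕜 V]
  [AddCommGroup W] [Module 𝕜 W] {ℓ : ℕ}
  {gV : V →ₗ[𝕜] V →ₗ[𝕜] 𝕜} {gW : W →ₗ[𝕜] W →ₗ[𝕜] 𝕜}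
  {A : (Fin (ℓ + 4) → V) → 𝕜} {B : (Fin (ℓ + 4) → W) → 𝕜}
  {R : (Fin (ℓ + 2) → V) → V →ₗ[𝕜] V} {S : (Fin (ℓ + 2) → W) → W →ₗ[𝕜] W}
  {φ : V → W} {c : 𝕜}

lemma pullback_eq_smul_of_intertwines
    (hAR : ∀ x, gV (R (curvSel x) (x 2)) (x 3) = A x)
    (hBS : ∀ y, gW (S (curvSel y) (y 2)) (y 3) = B y)
    (hφ : ∀ x y, gW (φ x) (φ y) = c * gV x y)
    (hRS : ∀ y x₃, φ (R y x₃) = S (fun i => φ (y i)) (φ x₃)) (x : Fin (ℓ + 4) → V) :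
    B (fun i => φ (x i)) = c * A x := by
  rw [← hBS, curvSel_comp, ← hRS, hφ, hAR]

lemma intertwines_of_pullback_eq_smul (hgW : gW.SeparatingLeft) (hsurj : φ.Surjective)
    (hAR : ∀ x, gV (R (curvSel x) (x 2)) (x 3) = A x)
    (hBS : ∀ y, gW (S (curvSel y) (y 2)) (y 3) = B y)
    (hφ : ∀ x y, gW (φ x) (φ y) = c * gV x y)
    (hAB : ∀ x, B (fun i => φ (x i)) = c * A x) (y : Fin (ℓ + 2) → V) (x₃ : V) :
    φ (R y x₃) = S (fun i => φ (y i)) (φ x₃) := by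
  refine LinearMap.ker_eq_bot.1 (LinearMap.separatingLeft_iff_ker_eq_bot.1 hgW) ?_
  ext w
  obtain ⟨x₄, rfl⟩ := hsurj w
  obtain ⟨x, rfl, rfl, rfl⟩ := exists_curvSel_eq y x₃ x₄
  rw [hφ, hAR, ← hAB, ← hBS, curvSel_comp]

end Transfer

section Rescaling

section CommSemiring

variable {R W : Type*} [CommSemiring R] [AddCommMonoid W] [Module R W]

lemma LinearMap.map_smul_smul₂ (g : W →ₗ[R] W →ₗ[R] R) (t : R) (v w : W) :
    g (t • v) (t • w) = t ^ 2 * g v w := by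
  simp only [map_smul, LinearMap.smul_apply, smul_eq_mul]
  ring

lemma MultilinearMap.map_const_smul {ι : Type*} [Fintype ι]
    (f : MultilinearMap R (fun _ : ι => W) R) (t : R) (x : ι → W) :
    f (fun i => t • x i) = t ^ Fintype.card ι * f x := by
  rw [f.map_smul_univ (fun _ => t), Finset.prod_const, Finset.card_univ, smul_eq_mul]

end CommSemiring

variable {K V W : Type*} [Field K] [AddCommGroup V] [Module K V] [AddCommGroup W] [Module K W]

lemma LinearEquiv.trans_smulOfNeZero_apply (φ : V ≃ₗ[K] W) {t : K} (ht : t ≠ 0) (v : V) :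
    φ.trans (LinearEquiv.smulOfNeZero K W t ht) v = t • φ v :=
  rfl

lemma pow_add_four_mul_zpow_neg_sub_two {t : K} (ht : t ≠ 0) (ℓ : ℕ) :
    t ^ (ℓ + 4) * t ^ (-(ℓ : ℤ) - 2) = t ^ 2 := by
  rw [← zpow_natCast, ← zpow_add₀ ht, ← zpow_natCast]
  push_cast
  ring_nf

end Rescaling

theorem stmt0_general {V W : Type*} [AddCommGroup V] [Module ℝ V]
    [AddCommGroup W] [Module ℝ W]
    (gV : V →ₗ[ℝ] V →ₗ[ℝ] ℝ) (gW : W →ₗ[ℝ] W →ₗ[ℝ] ℝ)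
    (hgWnd : ∀ x, (∀ y, gW x y = 0) → x = 0)
    (k : ℕ)
    (A : (ℓ : Fin (k + 1)) → MultilinearMap ℝ (fun _ : Fin ((ℓ : ℕ) + 4) => V) ℝ)
    (B : (ℓ : Fin (k + 1)) → MultilinearMap ℝ (fun _ : Fin ((ℓ : ℕ) + 4) => W) ℝ)
    (R : (ℓ : Fin (k + 1)) → MultilinearMap ℝ (fun _ : Fin ((ℓ : ℕ) + 2) => V) (V →ₗ[ℝ] V))
    (S : (ℓ : Fin (k + 1)) → MultilinearMap ℝ (fun _ : Fin ((ℓ : ℕ) + 2) => W) (W →ₗ[ℝ] W))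
    (hAR : ∀ (ℓ : Fin (k + 1)) (x : Fin ((ℓ : ℕ) + 4) → V),
      gV (R ℓ (curvSel x) (x 2)) (x 3) = A ℓ x)
    (hBS : ∀ (ℓ : Fin (k + 1)) (y : Fin ((ℓ : ℕ) + 4) → W),
      gW (S ℓ (curvSel y) (y 2)) (y 3) = B ℓ y) :
    (∃ lam : ℝ, 0 < lam ∧ ∃ φ : V ≃ₗ[ℝ] W,
      (∀ x y, gW (φ x) (φ y) = lam ^ 2 * gV x y) ∧
      (∀ (ℓ : Fin (k + 1)) (y : Fin ((ℓ : ℕ) + 2) → V) (x₃ : V),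
        φ (R ℓ y x₃) = S ℓ (fun i => φ (y i)) (φ x₃))) ↔
    (∃ μ : ℝ, μ ≠ 0 ∧ ∃ Φ : V ≃ₗ[ℝ] W,
      (∀ x y, gW (Φ x) (Φ y) = gV x y) ∧
      (∀ (ℓ : Fin (k + 1)) (x : Fin ((ℓ : ℕ) + 4) → V),
        B ℓ (fun i => Φ (x i)) = μ ^ (-((ℓ : ℕ) : ℤ) - 2) * A ℓ x)) := by
  constructor
  · rintro ⟨lam, hlam, φ, hφ, hRS⟩
    have hlam₀ : lam ≠ 0 := hlam.ne'
    refine ⟨lam, hlam₀, φ.trans (.smulOfNeZero ℝ W lam⁻¹ (inv_ne_zero hlam₀)), fun x y => ?_,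
      fun ℓ x => ?_⟩
    · rw [LinearEquiv.trans_smulOfNeZero_apply, LinearEquiv.trans_smulOfNeZero_apply,
        LinearMap.map_smul_smul₂, hφ, inv_pow, inv_mul_cancel_left₀ (pow_ne_zero 2 hlam₀)]
    · have hAB := pullback_eq_smul_of_intertwines (hAR ℓ) (hBS ℓ) hφ (hRS ℓ) x
      simp only [LinearEquiv.trans_smulOfNeZero_apply, MultilinearMap.map_const_smul,
        Fintype.card_fin, hAB, ← pow_add_four_mul_zpow_neg_sub_two hlam₀ ℓ]
      rw [inv_pow, mul_assoc, inv_mul_cancel_left₀ (pow_ne_zero _ hlam₀)]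
  · rintro ⟨μ, hμ, Φ, hΦ, hAB⟩
    have hφ (x y : V) :
        gW (Φ.trans (.smulOfNeZero ℝ W μ hμ) x) (Φ.trans (.smulOfNeZero ℝ W μ hμ) y) =
          |μ| ^ 2 * gV x y := by
      rw [LinearEquiv.trans_smulOfNeZero_apply, LinearEquiv.trans_smulOfNeZero_apply,
        LinearMap.map_smul_smul₂, hΦ, sq_abs]
    refine ⟨|μ|, abs_pos.2 hμ, Φ.trans (.smulOfNeZero ℝ W μ hμ), hφ, fun ℓ => ?_⟩
    refine intertwines_of_pullback_eq_smul hgWnd (LinearEquiv.surjective _) (hAR ℓ) (hBS ℓ) hφ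
      fun x => ?_
    simp only [LinearEquiv.trans_smulOfNeZero_apply, MultilinearMap.map_const_smul,
      Fintype.card_fin, hAB, sq_abs, ← pow_add_four_mul_zpow_neg_sub_two hμ ℓ]
    ring

theorem stmt0 {V W : Type*} [AddCommGroup V] [Module ℝ V] [FiniteDimensional ℝ V]
    [AddCommGroup W] [Module ℝ W] [FiniteDimensional ℝ W]
    (gV : V →ₗ[ℝ] V →ₗ[ℝ] ℝ) (gW : W →ₗ[ℝ] W →ₗ[ℝ] ℝ)
    (hgVsymm : ∀ x y, gV x y = gV y x)
    (hgVnd : ∀ x, (∀ y, gV x y = 0) → x = 0)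
    (hgWsymm : ∀ x y, gW x y = gW y x)
    (hgWnd : ∀ x, (∀ y, gW x y = 0) → x = 0)
    (k : ℕ)
    (A : (ℓ : Fin (k + 1)) → MultilinearMap ℝ (fun _ : Fin ((ℓ : ℕ) + 4) => V) ℝ)
    (B : (ℓ : Fin (k + 1)) → MultilinearMap ℝ (fun _ : Fin ((ℓ : ℕ) + 4) => W) ℝ)
    (R : (ℓ : Fin (k + 1)) → MultilinearMap ℝ (fun _ : Fin ((ℓ : ℕ) + 2) => V) (V →ₗ[ℝ] V))
    (S : (ℓ : Fin (k + 1)) → MultilinearMap ℝ (fun _ : Fin ((ℓ : ℕ) + 2) => W) (W →ₗ[ℝ] W))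
    (hAR : ∀ (ℓ : Fin (k + 1)) (x : Fin ((ℓ : ℕ) + 4) → V),
      gV (R ℓ (curvSel x) (x 2)) (x 3) = A ℓ x)
    (hBS : ∀ (ℓ : Fin (k + 1)) (y : Fin ((ℓ : ℕ) + 4) → W),
      gW (S ℓ (curvSel y) (y 2)) (y 3) = B ℓ y) :
    (∃ lam : ℝ, 0 < lam ∧ ∃ φ : V ≃ₗ[ℝ] W,
      (∀ x y, gW (φ x) (φ y) = lam ^ 2 * gV x y) ∧
      (∀ (ℓ : Fin (k + 1)) (y : Fin ((ℓ : ℕ) + 2) → V) (x₃ : V),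
        φ (R ℓ y x₃) = S ℓ (fun i => φ (y i)) (φ x₃))) ↔
    (∃ μ : ℝ, μ ≠ 0 ∧ ∃ Φ : V ≃ₗ[ℝ] W,
      (∀ x y, gW (Φ x) (Φ y) = gV x y) ∧
      (∀ (ℓ : Fin (k + 1)) (x : Fin ((ℓ : ℕ) + 4) → V),
        B ℓ (fun i => Φ (x i)) = μ ^ (-((ℓ : ℕ) : ℤ) - 2) * A ℓ x)) :=
  stmt0_general gV gW hgWnd k A B R S hAR hBS
end

section
/- For f : ℝ × ℝ → ℝ, define the Lorentzian metric g_f on ℝ³ (coordinates (x,y,z)) as the map assigning to each point p = (x,y,z) the symmetric bilinear form on ℝ³ given by g_f(p)(u,v) = −2·f(x,y)·u₁v₁ + u₂v₂ + u₁v₃ + u₃v₁. Let f : ℝ × ℝ → ℝ be any function, let β : ℝ → ℝ be twice differentiable, and define T : ℝ³ → ℝ³ by T(x,y,z) = (x, y − β(x), z + y·β'(x)) and f̃ : ℝ × ℝ → ℝ by f̃(x,y) = f(x, y − β(x)) − (1/2)·(β'(x)² + 2·y·β''(x)). Then T pulls g_f back to g_{f̃}: for every p ∈ ℝ³ and all u,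 v ∈ ℝ³, g_f(T(p))(DT_p u, DT_p v) = g_{f̃}(p)(u, v), where DT_p is the Fréchet derivative of T at p. -/
/-- The Walker Lorentzian metric on `ℝ³` determined by `f`:
`g_f(p)(u,v) = -2 f(x,y) u₁v₁ + u₂v₂ + u₁v₃ + u₃v₁` at `p = (x,y,z)`. -/
def gWalker (f : ℝ × ℝ → ℝ) (p : ℝ × ℝ × ℝ) (u v : ℝ × ℝ × ℝ) : ℝ :=
  -2 * f (p.1, p.2.1) * u.1 * v.1 + u.2.1 * v.2.1 + u.1 * v.2.2 + u.2.2 * v.1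

/-!
The differential of `T` at `(x, y, z)` sends `u` to
`(u₁, u₂ - β'(x) u₁, u₃ + β'(x) u₂ + y β''(x) u₁)`. Substituting into `g_f`, the mixed terms
`u₂v₂ + u₁v₃ + u₃v₁` reproduce themselves up to an extra `(β'(x)² + 2 y β''(x)) u₁v₁`, which is
exactly what the correction term in `f̃` absorbs.
-/

theorem fderiv_shear_apply {β β' : ℝ → ℝ} {b'' : ℝ} {p : ℝ × ℝ × ℝ}
    (hβ : HasDerivAt β (β' p.1) p.1) (hβ' : HasDerivAt β' b'' p.1) (u : ℝ × ℝ × ℝ) :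
    fderiv ℝ (fun q : ℝ × ℝ × ℝ => (q.1, q.2.1 - β q.1, q.2.2 + q.2.1 * β' q.1)) p u =
      (u.1, u.2.1 - β' p.1 * u.1, u.2.2 + (p.2.1 * (b'' * u.1) + β' p.1 * u.2.1)) := by
  have hx : HasFDerivAt (fun q : ℝ × ℝ × ℝ => q.1) (ContinuousLinearMap.fst ℝ ℝ (ℝ × ℝ)) p :=
    hasFDerivAt_fst
  have hy : HasFDerivAt (fun q : ℝ × ℝ × ℝ => q.2.1)
      ((ContinuousLinearMap.fst ℝ ℝ ℝ).comp (ContinuousLinearMap.snd ℝ ℝ (ℝ × ℝ))) p :=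
    hasFDerivAt_fst.comp p hasFDerivAt_snd
  have hz : HasFDerivAt (fun q : ℝ × ℝ × ℝ => q.2.2)
      ((ContinuousLinearMap.snd ℝ ℝ ℝ).comp (ContinuousLinearMap.snd ℝ ℝ (ℝ × ℝ))) p :=
    hasFDerivAt_snd.comp p hasFDerivAt_snd
  have hT : HasFDerivAt (fun q : ℝ × ℝ × ℝ => (q.1, q.2.1 - β q.1, q.2.2 + q.2.1 * β' q.1)) _ p :=
    hx.prodMk ((hy.sub (hβ.comp_hasFDerivAt p hx)).prodMk
      (hz.add (hy.mul (hβ'.comp_hasFDerivAt p hx))))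
  rw [hT.fderiv]
  simp only [ContinuousLinearMap.prod_apply, sub_apply, add_apply, smul_apply, smul_eq_mul,
    ContinuousLinearMap.coe_comp, Function.comp_apply, ContinuousLinearMap.coe_fst',
    ContinuousLinearMap.coe_snd']

theorem stmt3 (f : ℝ × ℝ → ℝ) (β β' β'' : ℝ → ℝ)
    (hβ : ∀ x, HasDerivAt β (β' x) x)
    (hβ' : ∀ x, HasDerivAt β' (β'' x) x)
    (T : ℝ × ℝ × ℝ → ℝ × ℝ × ℝ)
    (hT : ∀ p : ℝ × ℝ × ℝ, T p = (p.1, p.2.1 - β p.1, p.2.2 + p.2.1 * β' p.1))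
    (ftil : ℝ × ℝ → ℝ)
    (hftil : ∀ q : ℝ × ℝ,
      ftil q = f (q.1, q.2 - β q.1) - (1 / 2) * (β' q.1 ^ 2 + 2 * q.2 * β'' q.1)) :
    ∀ (p u v : ℝ × ℝ × ℝ),
      gWalker f (T p) (fderiv ℝ T p u) (fderiv ℝ T p v) = gWalker ftil p u v := by
  intro p u v
  have hDT (w : ℝ × ℝ × ℝ) := fderiv_shear_apply (hβ p.1) (hβ' p.1) w
  rw [← funext hT] at hDT
  rw [hDT, hDT, hT p]
  simp only [gWalker, hftil]
  ring
end

section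
/- For f : ℝ × ℝ → ℝ, define the Lorentzian metric g_f on ℝ³ (coordinates (x,y,z)) as the map assigning to each point p = (x,y,z) the symmetric bilinear form on ℝ³ given by g_f(p)(u,v) = −2·f(x,y)·u₁v₁ + u₂v₂ + u₁v₃ + u₃v₁. Let h : ℝ → ℝ and v : ℝ → ℝ be functions, set f(x,y) = h(y) + v(x), let w : ℝ → ℝ be differentiable with w' = v, and define T : ℝ³ → ℝ³ by T(x,y,z) = (x, y, z + w(x)). Then T pulls g_f back to the Walker metric of h: for every p ∈ ℝ³ and all u₀, v₀ ∈ ℝ³, g_f(T(p))(DT_p u₀, DT_p v₀) = g_{h̃}(p)(u₀, v₀), where h̃(x,y) = h(y) and DT_p is the Fréchet derivative of T at p. -/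
theorem fderiv_shear_apply_s4 {𝕜 G F : Type*} [NontriviallyNormedField 𝕜]
    [NormedAddCommGroup G] [NormedSpace 𝕜 G] [NormedAddCommGroup F] [NormedSpace 𝕜 F]
    {w : 𝕜 → F} {c : F} {p : 𝕜 × G × F} (hw : HasDerivAt w c p.1) (u : 𝕜 × G × F) :
    fderiv 𝕜 (fun q : 𝕜 × G × F => (q.1, q.2.1, q.2.2 + w q.1)) p u
      = (u.1, u.2.1, u.2.2 + u.1 • c) := by
  have hshear : HasFDerivAt (fun q : 𝕜 × G × F => (q.1, q.2.1, q.2.2 + w q.1))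
      ((ContinuousLinearMap.fst 𝕜 𝕜 (G × F)).prod
        (((ContinuousLinearMap.fst 𝕜 G F).comp (ContinuousLinearMap.snd 𝕜 𝕜 (G × F))).prod
          ((ContinuousLinearMap.snd 𝕜 G F).comp (ContinuousLinearMap.snd 𝕜 𝕜 (G × F)) +
            (ContinuousLinearMap.toSpanSingleton 𝕜 c).comp
              (ContinuousLinearMap.fst 𝕜 𝕜 (G × F))))) p :=
    hasFDerivAt_fst.prodMk ((hasFDerivAt_fst.comp p hasFDerivAt_snd).prodMk
      ((hasFDerivAt_snd.comp p hasFDerivAt_snd).add (hw.hasFDerivAt.comp p hasFDerivAt_fst)))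
  rw [hshear.fderiv]
  rfl

theorem gWalker_shear {f g : ℝ × ℝ → ℝ} {p q : ℝ × ℝ × ℝ} {c : ℝ}
    (hfg : f (q.1, q.2.1) = g (p.1, p.2.1) + c) (u v : ℝ × ℝ × ℝ) :
    gWalker f q (u.1, u.2.1, u.2.2 + u.1 * c) (v.1, v.2.1, v.2.2 + v.1 * c) = gWalker g p u v := by
  simp only [gWalker, hfg]
  ring

theorem stmt4 (h v : ℝ → ℝ) (f : ℝ × ℝ → ℝ)
    (hf : ∀ q : ℝ × ℝ, f q = h q.2 + v q.1)
    (w : ℝ → ℝ) (hw : ∀ x, HasDerivAt w (v x) x)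
    (T : ℝ × ℝ × ℝ → ℝ × ℝ × ℝ)
    (hT : ∀ p : ℝ × ℝ × ℝ, T p = (p.1, p.2.1, p.2.2 + w p.1))
    (htil : ℝ × ℝ → ℝ) (hhtil : ∀ q : ℝ × ℝ, htil q = h q.2) :
    ∀ (p u₀ v₀ : ℝ × ℝ × ℝ),
      gWalker f (T p) (fderiv ℝ T p u₀) (fderiv ℝ T p v₀) = gWalker htil p u₀ v₀ := by
  obtain rfl : T = fun p => (p.1, p.2.1, p.2.2 + w p.1) := funext hT
  intro p u₀ v₀
  rw [fderiv_shear_apply_s4 (hw p.1), fderiv_shear_apply_s4 (hw p.1)]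
  exact gWalker_shear (by rw [hf, hhtil]) u₀ v₀
end

section
/- For f : ℝ × ℝ → ℝ, define the Lorentzian metric g_f on ℝ³ (coordinates (x,y,z)) as the map assigning to each point p = (x,y,z) the symmetric bilinear form on ℝ³ given by g_f(p)(u,v) = −2·f(x,y)·u₁v₁ + u₂v₂ + u₁v₃ + u₃v₁. Let a ≠ 0 be real and f(x,y) = e^{a·y}. Then for every x₀, y₀, z₀ ∈ ℝ and every ε ∈ {1, −1}, the map T : ℝ³ → ℝ³ given by T(x,y,z) = (ε·e^{−a·y₀/2}·x + x₀, y + y₀, ε·e^{a·y₀/2}·z + z₀) is an isometry of g_f: for every p ∈ ℝ³ and all u, v ∈ ℝ³, g_f(T(p))(DT_p u, DT_p v) = g_f(p)(u, v), where DT_p is the Fréchet derivative of T at p. -/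
noncomputable def walkerScaling (c₁ c₃ : ℝ) : (ℝ × ℝ × ℝ) →L[ℝ] (ℝ × ℝ × ℝ) :=
  (c₁ • ContinuousLinearMap.fst ℝ ℝ (ℝ × ℝ)).prod
    ((ContinuousLinearMap.fst ℝ ℝ ℝ ∘L ContinuousLinearMap.snd ℝ ℝ (ℝ × ℝ)).prod
      (c₃ • ContinuousLinearMap.snd ℝ ℝ ℝ ∘L ContinuousLinearMap.snd ℝ ℝ (ℝ × ℝ)))

@[simp]
lemma walkerScaling_apply (c₁ c₃ : ℝ) (u : ℝ × ℝ × ℝ) :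
    walkerScaling c₁ c₃ u = (c₁ * u.1, u.2.1, c₃ * u.2.2) := by
  simp [walkerScaling]

lemma fderiv_walkerScaling_add_const (c₁ c₃ : ℝ) (t p : ℝ × ℝ × ℝ) :
    fderiv ℝ (fun q => walkerScaling c₁ c₃ q + t) p = walkerScaling c₁ c₃ := by
  rw [fderiv_add_const, ContinuousLinearMap.fderiv]

lemma gWalker_walkerScaling_add_const (f : ℝ × ℝ → ℝ) (c₁ c₃ : ℝ) (t : ℝ × ℝ × ℝ)
    (hc : c₁ * c₃ = 1) (hf : ∀ x y, f (c₁ * x + t.1, y + t.2.1) * c₁ ^ 2 = f (x, y))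
    (p u v : ℝ × ℝ × ℝ) :
    gWalker f (walkerScaling c₁ c₃ p + t) (walkerScaling c₁ c₃ u) (walkerScaling c₁ c₃ v) =
      gWalker f p u v := by
  simp only [gWalker, walkerScaling_apply, Prod.fst_add, Prod.snd_add, ← hf p.1 p.2.1]
  linear_combination (u.1 * v.2.2 + u.2.2 * v.1) * hc

lemma exp_mul_add_mul_sq (a y y₀ ε : ℝ) (hε : ε = 1 ∨ ε = -1) :
    Real.exp (a * (y + y₀)) * (ε * Real.exp (-a * y₀ / 2)) ^ 2 = Real.exp (a * y) := by
  have hε2 : ε ^ 2 = 1 := by rcases hε with rfl | rfl <;> norm_num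
  rw [mul_pow, hε2, one_mul, ← Real.exp_nat_mul, ← Real.exp_add]
  congr 1
  push_cast
  ring

lemma mul_exp_mul_mul_exp (a y₀ ε : ℝ) (hε : ε = 1 ∨ ε = -1) :
    ε * Real.exp (-a * y₀ / 2) * (ε * Real.exp (a * y₀ / 2)) = 1 := by
  have hε2 : ε * ε = 1 := by rcases hε with rfl | rfl <;> norm_num
  calc ε * Real.exp (-a * y₀ / 2) * (ε * Real.exp (a * y₀ / 2))
      = ε * ε * Real.exp (-a * y₀ / 2 + a * y₀ / 2) := by rw [Real.exp_add]; ring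
    _ = 1 := by rw [hε2]; ring_nf; exact Real.exp_zero

theorem stmt5_general (a : ℝ) (f : ℝ × ℝ → ℝ)
    (hf : ∀ q : ℝ × ℝ, f q = Real.exp (a * q.2))
    (x₀ y₀ z₀ ε : ℝ) (hε : ε = 1 ∨ ε = -1)
    (T : ℝ × ℝ × ℝ → ℝ × ℝ × ℝ)
    (hT : ∀ p : ℝ × ℝ × ℝ, T p =
      (ε * Real.exp (-a * y₀ / 2) * p.1 + x₀, p.2.1 + y₀,
        ε * Real.exp (a * y₀ / 2) * p.2.2 + z₀)) :
    ∀ (p u v : ℝ × ℝ × ℝ),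
      gWalker f (T p) (fderiv ℝ T p u) (fderiv ℝ T p v) = gWalker f p u v := by
  intro p u v
  set L := walkerScaling (ε * Real.exp (-a * y₀ / 2)) (ε * Real.exp (a * y₀ / 2))
  have hT_affine : T = fun q => L q + (x₀, y₀, z₀) := by
    funext q
    simp [hT, L]
  rw [hT_affine, fderiv_walkerScaling_add_const]
  refine gWalker_walkerScaling_add_const f _ _ _ (mul_exp_mul_mul_exp a y₀ ε hε) ?_ p u v
  intro x y
  simp only [hf]
  exact exp_mul_add_mul_sq a y y₀ ε hε

theorem stmt5 (a : ℝ) (ha : a ≠ 0) (f : ℝ × ℝ → ℝ)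
    (hf : ∀ q : ℝ × ℝ, f q = Real.exp (a * q.2))
    (x₀ y₀ z₀ ε : ℝ) (hε : ε = 1 ∨ ε = -1)
    (T : ℝ × ℝ × ℝ → ℝ × ℝ × ℝ)
    (hT : ∀ p : ℝ × ℝ × ℝ, T p =
      (ε * Real.exp (-a * y₀ / 2) * p.1 + x₀, p.2.1 + y₀,
        ε * Real.exp (a * y₀ / 2) * p.2.2 + z₀)) :
    ∀ (p u v : ℝ × ℝ × ℝ),
      gWalker f (T p) (fderiv ℝ T p u) (fderiv ℝ T p v) = gWalker f p u v :=
  stmt5_general a f hf x₀ y₀ z₀ ε hε T hT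
end

section
/- For f : ℝ × ℝ → ℝ, define the Lorentzian metric g_f on ℝ³ (coordinates (x,y,z)) as the map assigning to each point p = (x,y,z) the symmetric bilinear form on ℝ³ given by g_f(p)(u,v) = −2·f(x,y)·u₁v₁ + u₂v₂ + u₁v₃ + u₃v₁. Let a ≠ 0 be real and f(x,y) = e^{a·y}. Then the isometry group of g_f acts transitively on ℝ³: for any two points P, Q ∈ ℝ³ there exists a smooth bijection T : ℝ³ → ℝ³ with T(P) = Q such that for every p ∈ ℝ³ and all u, v ∈ ℝ³, g_f(T(p))(DT_p u, DT_p v) = g_f(p)(u, v), where DT_p is the Fréchet derivative of T at p. -/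
/-- The linear part of the affine isometry. -/
noncomputable def walkerL (c d : ℝ) : (ℝ × ℝ × ℝ) →L[ℝ] (ℝ × ℝ × ℝ) :=
  (c • ContinuousLinearMap.fst ℝ ℝ (ℝ × ℝ)).prod
    (((ContinuousLinearMap.fst ℝ ℝ ℝ).comp (ContinuousLinearMap.snd ℝ ℝ (ℝ × ℝ))).prod
      (d • (ContinuousLinearMap.snd ℝ ℝ ℝ).comp (ContinuousLinearMap.snd ℝ ℝ (ℝ × ℝ))))

lemma walkerL_apply (c d : ℝ) (u : ℝ × ℝ × ℝ) :
    walkerL c d u = (c * u.1, u.2.1, d * u.2.2) := by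
  simp [walkerL, smul_eq_mul]

theorem stmt6 (a : ℝ) (ha : a ≠ 0) (f : ℝ × ℝ → ℝ)
    (hf : ∀ q : ℝ × ℝ, f q = Real.exp (a * q.2)) :
    ∀ P Q : ℝ × ℝ × ℝ, ∃ T : ℝ × ℝ × ℝ → ℝ × ℝ × ℝ,
      ContDiff ℝ (⊤ : ℕ∞) T ∧ Function.Bijective T ∧ T P = Q ∧
      ∀ (p u v : ℝ × ℝ × ℝ),
        gWalker f (T p) (fderiv ℝ T p u) (fderiv ℝ T p v) = gWalker f p u v := by
  intro P Q
  set b2 : ℝ := Q.2.1 - P.2.1 with hb2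
  set c : ℝ := Real.exp (-(a * b2) / 2) with hc
  set d : ℝ := Real.exp ((a * b2) / 2) with hd
  have hcd : c * d = 1 := by
    rw [hc, hd, ← Real.exp_add]; ring_nf; exact Real.exp_zero
  set b1 : ℝ := Q.1 - c * P.1 with hb1
  set b3 : ℝ := Q.2.2 - d * P.2.2 with hb3
  set L := walkerL c d with hL
  set T : ℝ × ℝ × ℝ → ℝ × ℝ × ℝ := fun p => L p + (b1, b2, b3) with hT
  have hderiv : ∀ p, HasFDerivAt T L p := fun p => (L.hasFDerivAt).add_const _
  have hTp : ∀ p : ℝ × ℝ × ℝ, T p = (c * p.1 + b1, p.2.1 + b2, d * p.2.2 + b3) := by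
    intro p
    simp only [hT, hL, walkerL_apply, Prod.mk_add_mk]
  refine ⟨T, ?_, ?_, ?_, ?_⟩
  · exact (L.contDiff).add contDiff_const
  · have hc0 : c ≠ 0 := Real.exp_ne_zero _
    have hd0 : d ≠ 0 := Real.exp_ne_zero _
    refine Function.bijective_iff_has_inverse.mpr
      ⟨fun q => (c⁻¹ * (q.1 - b1), q.2.1 - b2, d⁻¹ * (q.2.2 - b3)), ?_, ?_⟩
    · intro p
      simp only [hTp, Prod.ext_iff]
      refine ⟨by field_simp; ring, by ring, by field_simp; ring⟩
    · intro q
      simp only [hTp, Prod.ext_iff]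
      refine ⟨by field_simp; ring, by ring, by field_simp; ring⟩
  · rw [hTp]
    simp only [hb1, hb2, hb3, Prod.ext_iff]
    refine ⟨by ring, by ring, by ring⟩
  · intro p u v
    have hfd : fderiv ℝ T p = L := (hderiv p).fderiv
    rw [hfd, hL]
    simp only [walkerL_apply, hTp, gWalker, hf]
    have hexp : Real.exp (a * (p.2.1 + b2)) * (c * c) = Real.exp (a * p.2.1) := by
      rw [hc, ← Real.exp_add, ← Real.exp_add]
      ring_nf
    linear_combination (-2 * u.1 * v.1) * hexp + (u.1 * v.2.2 + u.2.2 * v.1) * hcd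
end

section
/- For f : ℝ × ℝ → ℝ, define the Lorentzian metric g_f on ℝ³ (coordinates (x,y,z)) as the map assigning to each point p = (x,y,z) the symmetric bilinear form on ℝ³ given by g_f(p)(u,v) = −2·f(x,y)·u₁v₁ + u₂v₂ + u₁v₃ + u₃v₁. Let M = ℝ × (0,∞) × ℝ and f(x,y) = ln(y). Then for every λ > 0 and x₀, z₀ ∈ ℝ, the map T(x,y,z) = (λ·x + x₀, λ·y, λ·z + z₀ + λ·(ln λ)·x) maps M bijectively onto M and is a homothety of g_f with factor λ²: for every p ∈ M and all u, v ∈ ℝ³, g_f(T(p))(DT_p u, DT_p v) = λ²·g_f(p)(u, v), where DT_p is the Fréchet derivative of T at p. -/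
/-!
The map `T` is affine with linear part `u ↦ (λu₁, λu₂, λu₃ + λ ln λ · u₁)`. Scaling all three
coordinates multiplies `g_f` by `λ²`, and the shear term `λ ln λ · u₁` in the third slot adds
`2λ² ln λ · u₁v₁`, which is exactly cancelled by `ln (λy) = ln λ + ln y` in the coefficient
`-2 f`. Bijectivity on `y > 0` holds because the maps of this family form a group: the inverse of
`T` is again of the same form, with parameters `λ⁻¹`, `-x₀/λ`, `(x₀ ln λ - z₀)/λ`.
-/

open Real

noncomputable def walkerHomothety (lam x₀ z₀ : ℝ) (p : ℝ × ℝ × ℝ) : ℝ × ℝ × ℝ :=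
  (lam * p.1 + x₀, lam * p.2.1, lam * p.2.2 + z₀ + lam * log lam * p.1)

noncomputable def walkerShear (a b : ℝ) : (ℝ × ℝ × ℝ) →L[ℝ] (ℝ × ℝ × ℝ) :=
  LinearMap.toContinuousLinearMap
    { toFun := fun u => (a * u.1, a * u.2.1, a * u.2.2 + b * u.1)
      map_add' := fun u v => by simp only [Prod.fst_add, Prod.snd_add, Prod.mk_add_mk]; ext <;> ring
      map_smul' := fun c u => by
        simp only [Prod.smul_fst, Prod.smul_snd, smul_eq_mul, RingHom.id_apply, Prod.smul_mk]
        ext <;> ring }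

@[simp]
theorem walkerShear_apply (a b : ℝ) (u : ℝ × ℝ × ℝ) :
    walkerShear a b u = (a * u.1, a * u.2.1, a * u.2.2 + b * u.1) :=
  rfl

theorem gWalker_walkerShear {f : ℝ × ℝ → ℝ} {p q : ℝ × ℝ × ℝ} {a b : ℝ}
    (h : a * f (q.1, q.2.1) = a * f (p.1, p.2.1) + b) (u v : ℝ × ℝ × ℝ) :
    gWalker f q (walkerShear a b u) (walkerShear a b v) = a ^ 2 * gWalker f p u v := by
  simp only [gWalker, walkerShear_apply]
  linear_combination (-2 * a * u.1 * v.1) * h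

theorem hasFDerivAt_walkerHomothety (lam x₀ z₀ : ℝ) (p : ℝ × ℝ × ℝ) :
    HasFDerivAt (walkerHomothety lam x₀ z₀) (walkerShear lam (lam * log lam)) p := by
  have hsplit : walkerHomothety lam x₀ z₀ =
      fun q => walkerShear lam (lam * log lam) q + (x₀, 0, z₀) := by
    funext q
    simp only [walkerHomothety, walkerShear_apply, Prod.mk_add_mk]
    ext <;> simp only <;> ring
  rw [hsplit]
  exact (walkerShear lam (lam * log lam)).hasFDerivAt.add_const _

theorem walkerHomothety_inv_comp {lam : ℝ} (hlam : lam ≠ 0) (x₀ z₀ : ℝ) :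
    Function.LeftInverse (walkerHomothety lam⁻¹ (-x₀ / lam) ((x₀ * log lam - z₀) / lam))
      (walkerHomothety lam x₀ z₀) := by
  intro p
  simp only [walkerHomothety, log_inv]
  ext <;> field_simp <;> ring

theorem walkerHomothety_comp_inv {lam : ℝ} (hlam : lam ≠ 0) (x₀ z₀ : ℝ) :
    Function.RightInverse (walkerHomothety lam⁻¹ (-x₀ / lam) ((x₀ * log lam - z₀) / lam))
      (walkerHomothety lam x₀ z₀) := by
  intro p
  simp only [walkerHomothety, log_inv]
  ext <;> field_simp <;> ring

theorem mapsTo_walkerHomothety {lam : ℝ} (hlam : 0 < lam) (x₀ z₀ : ℝ) :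
    Set.MapsTo (walkerHomothety lam x₀ z₀) {p | 0 < p.2.1} {p | 0 < p.2.1} :=
  fun _ hp => mul_pos hlam hp

theorem bijOn_walkerHomothety {lam : ℝ} (hlam : 0 < lam) (x₀ z₀ : ℝ) :
    Set.BijOn (walkerHomothety lam x₀ z₀) {p | 0 < p.2.1} {p | 0 < p.2.1} :=
  Set.InvOn.bijOn
    ⟨(walkerHomothety_inv_comp hlam.ne' x₀ z₀).leftInvOn _,
      (walkerHomothety_comp_inv hlam.ne' x₀ z₀).rightInvOn _⟩
    (mapsTo_walkerHomothety hlam x₀ z₀) (mapsTo_walkerHomothety (inv_pos.mpr hlam) _ _)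

theorem stmt7 (f : ℝ × ℝ → ℝ) (hf : ∀ q : ℝ × ℝ, f q = Real.log q.2)
    (M : Set (ℝ × ℝ × ℝ)) (hM : M = {p : ℝ × ℝ × ℝ | 0 < p.2.1})
    (lam x₀ z₀ : ℝ) (hlam : 0 < lam)
    (T : ℝ × ℝ × ℝ → ℝ × ℝ × ℝ)
    (hT : ∀ p : ℝ × ℝ × ℝ, T p =
      (lam * p.1 + x₀, lam * p.2.1, lam * p.2.2 + z₀ + lam * Real.log lam * p.1)) :
    Set.BijOn T M M ∧
    ∀ p ∈ M, ∀ u v : ℝ × ℝ × ℝ,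
      gWalker f (T p) (fderiv ℝ T p u) (fderiv ℝ T p v) = lam ^ 2 * gWalker f p u v := by
  obtain rfl : T = walkerHomothety lam x₀ z₀ := funext hT
  subst hM
  refine ⟨bijOn_walkerHomothety hlam x₀ z₀, fun p hp u v => ?_⟩
  rw [(hasFDerivAt_walkerHomothety lam x₀ z₀ p).fderiv]
  refine gWalker_walkerShear ?_ u v
  simp only [hf, walkerHomothety, log_mul hlam.ne' (ne_of_gt hp)]
  ring
end

section
/- For f : ℝ × ℝ → ℝ, define the Lorentzian metric g_f on ℝ³ (coordinates (x,y,z)) as the map assigning to each point p = (x,y,z) the symmetric bilinear form on ℝ³ given by g_f(p)(u,v) = −2·f(x,y)·u₁v₁ + u₂v₂ + u₁v₃ + u₃v₁. Let M = ℝ × (0,∞) × ℝ and f(x,y) = ln(y). Then the homothety group of g_f acts transitively on M: for any two points P, Q ∈ M there exist λ > 0 and a smooth bijection T : M → M with T(P) = Q such that for every p ∈ M and all u, v ∈ ℝ³, g_f(T(p))(DT_p u, DT_p v) = λ²·g_f(p)(u, v), where DT_p is the Fréchet derivative of T at p. -/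
theorem stmt8 (f : ℝ × ℝ → ℝ) (hf : ∀ q : ℝ × ℝ, f q = Real.log q.2)
    (M : Set (ℝ × ℝ × ℝ)) (hM : M = {p : ℝ × ℝ × ℝ | 0 < p.2.1}) :
    ∀ P ∈ M, ∀ Q ∈ M, ∃ lam : ℝ, 0 < lam ∧
      ∃ T : ℝ × ℝ × ℝ → ℝ × ℝ × ℝ,
        ContDiffOn ℝ (⊤ : ℕ∞) T M ∧ Set.BijOn T M M ∧ T P = Q ∧
        ∀ p ∈ M, ∀ u v : ℝ × ℝ × ℝ,
          gWalker f (T p) (fderiv ℝ T p u) (fderiv ℝ T p v)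
            = lam ^ 2 * gWalker f p u v := by
  intro P hP Q hQ
  rw [hM] at hP hQ
  have hP' : (0:ℝ) < P.2.1 := hP
  have hQ' : (0:ℝ) < Q.2.1 := hQ
  set l : ℝ := Q.2.1 / P.2.1 with hl
  have hlpos : 0 < l := div_pos hQ' hP'
  set m : ℝ := l * Real.log l with hm
  set a : ℝ := Q.1 - l * P.1 with ha
  set c : ℝ := Q.2.2 - l * P.2.2 - m * P.1 with hc
  -- the linear part
  let fst : (ℝ × ℝ × ℝ) →L[ℝ] ℝ := ContinuousLinearMap.fst ℝ ℝ (ℝ × ℝ)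
  let snd1 : (ℝ × ℝ × ℝ) →L[ℝ] ℝ :=
    (ContinuousLinearMap.fst ℝ ℝ ℝ).comp (ContinuousLinearMap.snd ℝ ℝ (ℝ × ℝ))
  let snd2 : (ℝ × ℝ × ℝ) →L[ℝ] ℝ :=
    (ContinuousLinearMap.snd ℝ ℝ ℝ).comp (ContinuousLinearMap.snd ℝ ℝ (ℝ × ℝ))
  let L : (ℝ × ℝ × ℝ) →L[ℝ] (ℝ × ℝ × ℝ) :=
    (l • fst).prod ((l • snd1).prod (l • snd2 + m • fst))
  have hLapply : ∀ u : ℝ × ℝ × ℝ, L u = (l * u.1, l * u.2.1, l * u.2.2 + m * u.1) := by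
    intro u; rfl
  let T : ℝ × ℝ × ℝ → ℝ × ℝ × ℝ := fun p => ((a, 0, c) : ℝ × ℝ × ℝ) + L p
  have hTapply : ∀ p : ℝ × ℝ × ℝ,
      T p = (a + l * p.1, l * p.2.1, c + (l * p.2.2 + m * p.1)) := by
    intro p
    show ((a, 0, c) : ℝ × ℝ × ℝ) + L p = _
    rw [hLapply]
    simp [Prod.ext_iff]
  have hfd : ∀ p : ℝ × ℝ × ℝ, fderiv ℝ T p = L := by
    intro p
    exact (L.hasFDerivAt.const_add ((a, 0, c) : ℝ × ℝ × ℝ)).fderiv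
  refine ⟨l, hlpos, T, ?_, ?_, ?_, ?_⟩
  · exact (contDiff_const.add L.contDiff).contDiffOn
  · -- bijectivity on M
    let S : ℝ × ℝ × ℝ → ℝ × ℝ × ℝ := fun q =>
      ((q.1 - a) / l, q.2.1 / l, (q.2.2 - c - m * ((q.1 - a) / l)) / l)
    have hmapsT : Set.MapsTo T M M := by
      intro p hp
      rw [hM] at hp ⊢
      rw [hTapply]
      exact mul_pos hlpos hp
    have hmapsS : Set.MapsTo S M M := by
      intro q hq
      rw [hM] at hq ⊢
      exact div_pos hq hlpos
    refine Set.InvOn.bijOn ⟨?_, ?_⟩ hmapsT hmapsS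
    · intro p hp
      rw [hTapply]
      show (_, _, _) = p
      rw [Prod.ext_iff, Prod.ext_iff]
      refine ⟨?_, ?_, ?_⟩ <;> field_simp <;> ring
    · intro q hq
      rw [hTapply]
      rw [Prod.ext_iff, Prod.ext_iff]
      refine ⟨?_, ?_, ?_⟩ <;> simp only [S] <;> field_simp <;> ring
  · rw [hTapply]
    rw [Prod.ext_iff, Prod.ext_iff]
    refine ⟨by rw [ha]; ring, ?_, by rw [hc]; ring⟩
    rw [hl]
    field_simp
  · intro p hp u v
    rw [hM] at hp
    have hp' : (0:ℝ) < p.2.1 := hp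
    rw [hfd, hLapply, hLapply, hTapply]
    simp only [gWalker, hf]
    have hlog : Real.log (l * p.2.1) = Real.log l + Real.log p.2.1 :=
      Real.log_mul hlpos.ne' hp'.ne'
    rw [hlog, hm]
    ring
end

section
/- For f : ℝ × ℝ → ℝ, define the Lorentzian metric g_f on ℝ³ (coordinates (x,y,z)) as the map assigning to each point p = (x,y,z) the symmetric bilinear form on ℝ³ given by g_f(p)(u,v) = −2·f(x,y)·u₁v₁ + u₂v₂ + u₁v₃ + u₃v₁. Let M = ℝ × (0,∞) × ℝ, let c ∈ ℝ with c ∉ {0,1,2}, and f(x,y) = y^c. Then for every λ > 0 and x₀, z₀ ∈ ℝ, the map T(x,y,z) = (λ^{(2−c)/2}·x + x₀, λ·y, λ^{(2+c)/2}·z + z₀) maps M bijectively onto M and is a homothety of g_f with factor λ²: for every p ∈ M and all u, v ∈ ℝ³, g_f(T(p))(DT_p u, DT_p v) = λ²·g_f(p)(u, v), where DT_p is the Fréchet derivative of T at p. -/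
def diagCLM (a b d : ℝ) : (ℝ × ℝ × ℝ) →L[ℝ] ℝ × ℝ × ℝ :=
  (a • ContinuousLinearMap.id ℝ ℝ).prodMap
    ((b • ContinuousLinearMap.id ℝ ℝ).prodMap (d • ContinuousLinearMap.id ℝ ℝ))

@[simp]
lemma diagCLM_apply (a b d : ℝ) (u : ℝ × ℝ × ℝ) :
    diagCLM a b d u = (a * u.1, b * u.2.1, d * u.2.2) := by
  simp [diagCLM, Prod.map]

def diagAffine (a b d : ℝ) (t p : ℝ × ℝ × ℝ) : ℝ × ℝ × ℝ :=
  (a * p.1 + t.1, b * p.2.1 + t.2.1, d * p.2.2 + t.2.2)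

section diagAffine

variable {a b d : ℝ} {t : ℝ × ℝ × ℝ}

lemma diagAffine_eq_diagCLM_add : diagAffine a b d t = fun p => diagCLM a b d p + t := by
  funext p
  simp [diagAffine, Prod.ext_iff]

lemma hasFDerivAt_diagAffine (p : ℝ × ℝ × ℝ) :
    HasFDerivAt (diagAffine a b d t) (diagCLM a b d) p := by
  rw [diagAffine_eq_diagCLM_add]
  exact (diagCLM a b d).hasFDerivAt.add_const t

lemma fderiv_diagAffine (p : ℝ × ℝ × ℝ) :
    fderiv ℝ (diagAffine a b d t) p = diagCLM a b d :=
  (hasFDerivAt_diagAffine p).fderiv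

lemma leftInverse_diagAffine (ha : a ≠ 0) (hb : b ≠ 0) (hd : d ≠ 0) :
    Function.LeftInverse
      (diagAffine a⁻¹ b⁻¹ d⁻¹ (-(t.1 / a), -(t.2.1 / b), -(t.2.2 / d))) (diagAffine a b d t) := by
  intro p
  simp only [diagAffine]
  ext <;> field_simp <;> ring

lemma rightInverse_diagAffine (ha : a ≠ 0) (hb : b ≠ 0) (hd : d ≠ 0) :
    Function.RightInverse
      (diagAffine a⁻¹ b⁻¹ d⁻¹ (-(t.1 / a), -(t.2.1 / b), -(t.2.2 / d))) (diagAffine a b d t) := by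
  intro p
  simp only [diagAffine]
  ext <;> field_simp <;> ring

lemma bijOn_diagAffine_upperHalfSpace (ha : a ≠ 0) (hb : 0 < b) (hd : d ≠ 0)
    (x₀ z₀ : ℝ) :
    Set.BijOn (diagAffine a b d (x₀, 0, z₀)) {p | 0 < p.2.1} {p | 0 < p.2.1} := by
  refine Set.InvOn.bijOn
    ⟨(leftInverse_diagAffine ha hb.ne' hd).leftInvOn _,
      (rightInverse_diagAffine ha hb.ne' hd).rightInvOn _⟩ ?_ ?_
  · intro p (hp : 0 < p.2.1)
    simpa [diagAffine] using mul_pos hb hp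
  · intro p (hp : 0 < p.2.1)
    simpa [diagAffine] using mul_pos (inv_pos.2 hb) hp

lemma gWalker_diagAffine (f : ℝ × ℝ → ℝ) {k : ℝ} (p u v : ℝ × ℝ × ℝ)
    (hx : a * a * f (a * p.1 + t.1, b * p.2.1 + t.2.1) = k * f (p.1, p.2.1))
    (hy : b * b = k) (hxz : a * d = k) :
    gWalker f (diagAffine a b d t p) (diagCLM a b d u) (diagCLM a b d v) =
      k * gWalker f p u v := by
  simp only [gWalker, diagAffine, diagCLM_apply]
  linear_combination (-2 * u.1 * v.1) * hx + (u.2.1 * v.2.1) * hy +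
    (u.1 * v.2.2 + u.2.2 * v.1) * hxz

end diagAffine

theorem stmt9_general (c : ℝ)
    (f : ℝ × ℝ → ℝ) (hf : ∀ q : ℝ × ℝ, f q = q.2 ^ c)
    (M : Set (ℝ × ℝ × ℝ)) (hM : M = {p : ℝ × ℝ × ℝ | 0 < p.2.1})
    (lam x₀ z₀ : ℝ) (hlam : 0 < lam)
    (T : ℝ × ℝ × ℝ → ℝ × ℝ × ℝ)
    (hT : ∀ p : ℝ × ℝ × ℝ, T p =
      (lam ^ ((2 - c) / 2) * p.1 + x₀, lam * p.2.1, lam ^ ((2 + c) / 2) * p.2.2 + z₀)) :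
    Set.BijOn T M M ∧
    ∀ p ∈ M, ∀ u v : ℝ × ℝ × ℝ,
      gWalker f (T p) (fderiv ℝ T p u) (fderiv ℝ T p v) = lam ^ 2 * gWalker f p u v := by
  have hT' : T = diagAffine (lam ^ ((2 - c) / 2)) lam (lam ^ ((2 + c) / 2)) (x₀, 0, z₀) := by
    funext p
    simp [hT, diagAffine]
  subst hT' hM
  refine ⟨bijOn_diagAffine_upperHalfSpace (by positivity) hlam (by positivity) x₀ z₀,
    fun p (hp : 0 < p.2.1) u v => ?_⟩
  rw [fderiv_diagAffine]
  refine gWalker_diagAffine f p u v ?_ (by ring) ?_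
  · have hA : lam ^ ((2 - c) / 2) * lam ^ ((2 - c) / 2) * lam ^ c = lam ^ 2 := by
      rw [← Real.rpow_add hlam, ← Real.rpow_add hlam, ← Real.rpow_two]
      congr 1
      ring
    simp only [hf, add_zero, Real.mul_rpow hlam.le hp.le]
    linear_combination p.2.1 ^ c * hA
  · rw [← Real.rpow_add hlam, ← Real.rpow_two]
    congr 1
    ring

theorem stmt9 (c : ℝ) (hc0 : c ≠ 0) (hc1 : c ≠ 1) (hc2 : c ≠ 2)
    (f : ℝ × ℝ → ℝ) (hf : ∀ q : ℝ × ℝ, f q = q.2 ^ c)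
    (M : Set (ℝ × ℝ × ℝ)) (hM : M = {p : ℝ × ℝ × ℝ | 0 < p.2.1})
    (lam x₀ z₀ : ℝ) (hlam : 0 < lam)
    (T : ℝ × ℝ × ℝ → ℝ × ℝ × ℝ)
    (hT : ∀ p : ℝ × ℝ × ℝ, T p =
      (lam ^ ((2 - c) / 2) * p.1 + x₀, lam * p.2.1, lam ^ ((2 + c) / 2) * p.2.2 + z₀)) :
    Set.BijOn T M M ∧
    ∀ p ∈ M, ∀ u v : ℝ × ℝ × ℝ,
      gWalker f (T p) (fderiv ℝ T p u) (fderiv ℝ T p v) = lam ^ 2 * gWalker f p u v :=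
  stmt9_general c f hf M hM lam x₀ z₀ hlam T hT
end

section
/- For f : ℝ × ℝ → ℝ, define the Lorentzian metric g_f on ℝ³ (coordinates (x,y,z)) as the map assigning to each point p = (x,y,z) the symmetric bilinear form on ℝ³ given by g_f(p)(u,v) = −2·f(x,y)·u₁v₁ + u₂v₂ + u₁v₃ + u₃v₁. Let M = ℝ × (0,∞) × ℝ, let c ∈ ℝ with c ∉ {0,1,2}, and f(x,y) = y^c. Then the homothety group of g_f acts transitively on M: for any two points P, Q ∈ M there exist λ > 0 and a smooth bijection T : M → M with T(P) = Q such that for every p ∈ M and all u, v ∈ ℝ³, g_f(T(p))(DT_p u, DT_p v) = λ²·g_f(p)(u, v), where DT_p is the Fréchet derivative of T at p. -/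
theorem stmt10 (c : ℝ) (hc0 : c ≠ 0) (hc1 : c ≠ 1) (hc2 : c ≠ 2)
    (f : ℝ × ℝ → ℝ) (hf : ∀ q : ℝ × ℝ, f q = q.2 ^ c)
    (M : Set (ℝ × ℝ × ℝ)) (hM : M = {p : ℝ × ℝ × ℝ | 0 < p.2.1}) :
    ∀ P ∈ M, ∀ Q ∈ M, ∃ lam : ℝ, 0 < lam ∧
      ∃ T : ℝ × ℝ × ℝ → ℝ × ℝ × ℝ,
        ContDiffOn ℝ (⊤ : ℕ∞) T M ∧ Set.BijOn T M M ∧ T P = Q ∧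
        ∀ p ∈ M, ∀ u v : ℝ × ℝ × ℝ,
          gWalker f (T p) (fderiv ℝ T p u) (fderiv ℝ T p v)
            = lam ^ 2 * gWalker f p u v := by
  subst hM
  intro P hP Q hQ
  have hPy : (0:ℝ) < P.2.1 := hP
  have hQy : (0:ℝ) < Q.2.1 := hQ
  set lam : ℝ := Q.2.1 / P.2.1 with hlam
  have hl : 0 < lam := div_pos hQy hPy
  refine ⟨lam, hl, ?_⟩
  set a : ℝ := lam ^ ((2 - c) / 2) with ha
  set b : ℝ := lam ^ ((2 + c) / 2) with hb
  have hapos : 0 < a := Real.rpow_pos_of_pos hl _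
  have hbpos : 0 < b := Real.rpow_pos_of_pos hl _
  have hab : a * b = lam ^ 2 := by
    rw [ha, hb, ← Real.rpow_add hl]
    rw [show (2 - c) / 2 + (2 + c) / 2 = (2:ℝ) by ring]
    rw [show ((2:ℝ)) = ((2:ℕ):ℝ) by norm_num, Real.rpow_natCast]
  have hlP : lam * P.2.1 = Q.2.1 := by
    rw [hlam]; field_simp [hPy.ne']
  -- the linear part
  let L : ℝ × ℝ × ℝ →L[ℝ] ℝ × ℝ × ℝ :=
    (a • ContinuousLinearMap.fst ℝ ℝ (ℝ × ℝ)).prod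
      ((lam • (ContinuousLinearMap.fst ℝ ℝ ℝ).comp (ContinuousLinearMap.snd ℝ ℝ (ℝ × ℝ))).prod
        (b • (ContinuousLinearMap.snd ℝ ℝ ℝ).comp (ContinuousLinearMap.snd ℝ ℝ (ℝ × ℝ))))
  have hLapp : ∀ p : ℝ × ℝ × ℝ, L p = (a * p.1, lam * p.2.1, b * p.2.2) := fun p => rfl
  set k : ℝ × ℝ × ℝ := Q - L P with hk
  have hk2 : k.2.1 = 0 := by
    simp [hk, hLapp, hlP]
  refine ⟨fun p => L p + k, ?_, ?_, ?_, ?_⟩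
  · exact ((L.contDiff.add contDiff_const)).contDiffOn
  · -- bijectivity
    have hmem : ∀ p : ℝ × ℝ × ℝ, (L p + k).2.1 = lam * p.2.1 := by
      intro p; simp [hLapp, hk2]
    constructor
    · intro p hp
      show (0:ℝ) < (L p + k).2.1
      rw [hmem]
      exact mul_pos hl hp
    constructor
    · intro p _ q _ h
      have h1 : a * p.1 + k.1 = a * q.1 + k.1 := congrArg (fun r => r.1) h
      have h2 : lam * p.2.1 = lam * q.2.1 := by
        rw [← hmem p, ← hmem q]
        exact congrArg (fun r => r.2.1) h
      have h3 : b * p.2.2 + k.2.2 = b * q.2.2 + k.2.2 := congrArg (fun r => r.2.2) h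
      have e1 : p.1 = q.1 := by
        have := mul_left_cancel₀ hapos.ne' (by linarith : a * p.1 = a * q.1); exact this
      have e2 : p.2.1 = q.2.1 := mul_left_cancel₀ hl.ne' h2
      have e3 : p.2.2 = q.2.2 := mul_left_cancel₀ hbpos.ne' (by linarith)
      exact Prod.ext e1 (Prod.ext e2 e3)
    · intro q hq
      refine ⟨((q.1 - k.1) / a, q.2.1 / lam, (q.2.2 - k.2.2) / b), ?_, ?_⟩
      · show (0:ℝ) < q.2.1 / lam
        exact div_pos hq hl
      · have : L ((q.1 - k.1) / a, q.2.1 / lam, (q.2.2 - k.2.2) / b) + k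
            = (q.1, q.2.1, q.2.2) := by
          rw [hLapp]
          have e1 : a * ((q.1 - k.1) / a) = q.1 - k.1 := by field_simp
          have e2 : lam * (q.2.1 / lam) = q.2.1 := by field_simp
          have e3 : b * ((q.2.2 - k.2.2) / b) = q.2.2 - k.2.2 := by field_simp
          ext <;> simp [e1, e2, e3, hk2] <;> ring
        simpa using this
  · show L P + k = Q
    simp [hk]
  · intro p hp u v
    have hD : fderiv ℝ (fun p => L p + k) p = L :=
      (L.hasFDerivAt.add_const k).fderiv
    rw [hD]
    have hTp2 : (L p + k).2.1 = lam * p.2.1 := by simp [hLapp, hk2]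
    have hy : (0:ℝ) < p.2.1 := hp
    have hkey : a * a * (lam * p.2.1) ^ c = lam ^ 2 * p.2.1 ^ c := by
      rw [Real.mul_rpow hl.le hy.le, ha, ← Real.rpow_add hl, ← mul_assoc, ← Real.rpow_add hl]
      rw [show (2 - c) / 2 + (2 - c) / 2 + c = (2:ℝ) by ring]
      rw [show ((2:ℝ)) = ((2:ℕ):ℝ) by norm_num, Real.rpow_natCast]
    simp only [gWalker, hf, hLapp, Prod.snd_add, Prod.fst_add, hk2, add_zero]
    linear_combination (-2 * u.1 * v.1) * hkey + (u.1 * v.2.2 + u.2.2 * v.1) * hab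
end

section
/- Let I ⊆ ℝ be a nonempty open interval, let c ∈ ℝ with c ≠ 1, and let α : I → ℝ be twice differentiable with α(t) > 0 and α'(t) ≠ 0 for all t ∈ I, satisfying α(t)·α''(t) = c·α'(t)² for all t ∈ I. Then there exist A > 0 and t₀ ∈ ℝ with t₀ ∉ I such that α(t) = A·|t − t₀|^{1/(1−c)} for all t ∈ I. -/
/-!
The substitution `β = α ^ (1 - c)` linearises the equation: `β' = (1 - c) α ^ (-c) α'` and
`β'' = (1 - c) α ^ (-c - 1) (α α'' - c α'²) = 0`. Hence `β` is affine on the interval, with nonzero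
slope because `α' ≠ 0`, so `β t = |m| |t - t₀|` for a zero `t₀` of `β` which cannot lie in the
interval since `β > 0` there. Taking the `1 / (1 - c)`-th power recovers `α`.
-/

section MeanValue

variable {𝕜 G : Type*} [RCLike 𝕜] [NormedAddCommGroup G] [NormedSpace 𝕜 G] {s : Set 𝕜}

theorem Convex.eq_of_hasDerivAt_eq_zero (hs : Convex ℝ s) {f : 𝕜 → G}
    (hf : ∀ x ∈ s, HasDerivAt f 0 x) {x y : 𝕜} (hx : x ∈ s) (hy : y ∈ s) : f x = f y := by
  have := hs.norm_image_sub_le_of_norm_hasDerivWithin_le (fun z hz => (hf z hz).hasDerivWithinAt)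
    (fun _ _ => norm_zero.le) hx hy
  rw [zero_mul, norm_le_zero_iff, sub_eq_zero] at this
  exact this.symm

theorem Convex.eq_add_smul_of_hasDerivAt_of_hasDerivAt_zero (hs : Convex ℝ s) {f f' : 𝕜 → G}
    (hf : ∀ x ∈ s, HasDerivAt f (f' x) x) (hf' : ∀ x ∈ s, HasDerivAt f' 0 x) {a : 𝕜}
    (ha : a ∈ s) : ∀ x ∈ s, f x = f a + (x - a) • f' a := by
  intro x hx
  have hlin : ∀ z ∈ s, HasDerivAt (fun z => f z - (z - a) • f' a) 0 z := by
    intro z hz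
    have hsmul := ((hasDerivAt_id z).sub_const a).smul_const (f' a)
    rw [one_smul] at hsmul
    have hdiff := (hf z hz).sub hsmul
    rwa [hs.eq_of_hasDerivAt_eq_zero hf' hz ha, sub_self] at hdiff
  have := hs.eq_of_hasDerivAt_eq_zero hlin hx ha
  simp only [sub_self, zero_smul, sub_zero] at this
  rw [← this, sub_add_cancel]

end MeanValue

theorem HasDerivAt.rpow_const_mul {f g : ℝ → ℝ} {f' g' x : ℝ} (hf : HasDerivAt f f' x)
    (hg : HasDerivAt g g' x) (hx : 0 < f x) (p : ℝ) :
    HasDerivAt (fun y => f y ^ p * g y) (f x ^ (p - 1) * (p * f' * g x + f x * g')) x := by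
  refine ((hf.rpow_const (p := p) (Or.inl hx.ne')).mul hg).congr_deriv ?_
  have hsplit : f x ^ p = f x ^ (p - 1) * f x := by
    rw [← Real.rpow_add_one hx.ne', sub_add_cancel]
  rw [hsplit]
  ring

theorem hasDerivAt_rpow_neg_mul_eq_zero {α α' α'' : ℝ → ℝ} {c t : ℝ}
    (hd1 : HasDerivAt α (α' t) t) (hd2 : HasDerivAt α' (α'' t) t) (hpos : 0 < α t)
    (hODE : α t * α'' t = c * α' t ^ 2) : HasDerivAt (fun t => α t ^ (-c) * α' t) 0 t := by
  refine (hd1.rpow_const_mul hd2 hpos (-c)).congr_deriv ?_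
  have hzero : -c * α' t * α' t + α t * α'' t = 0 := by
    rw [hODE]
    ring
  rw [hzero, mul_zero]

theorem exists_notMem_forall_eq_abs_mul_abs_sub {I : Set ℝ} {b m s : ℝ} (hm : m ≠ 0)
    (hpos : ∀ t ∈ I, 0 < b + (t - s) * m) :
    ∃ t₀ ∉ I, ∀ t ∈ I, b + (t - s) * m = |m| * |t - t₀| := by
  have hlin : ∀ t, b + (t - s) * m = m * (t - (s - b / m)) := fun t => by
    field_simp
    ring
  refine ⟨s - b / m, fun h => ?_, fun t ht => ?_⟩
  · have := hpos _ h
    rw [hlin, sub_self, mul_zero] at this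
    exact this.false
  · rw [← abs_mul, ← hlin, abs_of_pos (hpos t ht)]

theorem stmt13_general (I : Set ℝ) (hne : I.Nonempty)
    (hconn : I.OrdConnected)
    (c : ℝ) (hc : c ≠ 1)
    (α α' α'' : ℝ → ℝ)
    (hd1 : ∀ t ∈ I, HasDerivAt α (α' t) t)
    (hd2 : ∀ t ∈ I, HasDerivAt α' (α'' t) t)
    (hpos : ∀ t ∈ I, 0 < α t)
    (hne0 : ∀ t ∈ I, α' t ≠ 0)
    (hODE : ∀ t ∈ I, α t * α'' t = c * α' t ^ 2) :
    ∃ A t₀ : ℝ, 0 < A ∧ t₀ ∉ I ∧ ∀ t ∈ I, α t = A * |t - t₀| ^ (1 / (1 - c)) := by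
  obtain ⟨s, hs⟩ := hne
  have he : 1 - c ≠ 0 := sub_ne_zero.mpr hc.symm
  have hβ : ∀ t ∈ I, HasDerivAt (fun t => α t ^ (1 - c)) ((1 - c) * (α t ^ (-c) * α' t)) t := by
    intro t ht
    refine ((hd1 t ht).rpow_const (p := 1 - c) (Or.inl (hpos t ht).ne')).congr_deriv ?_
    rw [sub_sub_cancel_left]
    ring
  have hβ' : ∀ t ∈ I, HasDerivAt (fun t => (1 - c) * (α t ^ (-c) * α' t)) 0 t :=
    fun t ht => ((hasDerivAt_rpow_neg_mul_eq_zero (hd1 t ht) (hd2 t ht) (hpos t ht)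
      (hODE t ht)).const_mul (1 - c)).congr_deriv (mul_zero _)
  set m := (1 - c) * (α s ^ (-c) * α' s)
  have hm : m ≠ 0 :=
    mul_ne_zero he (mul_ne_zero (Real.rpow_pos_of_pos (hpos s hs) _).ne' (hne0 s hs))
  have haff := hconn.convex.eq_add_smul_of_hasDerivAt_of_hasDerivAt_zero hβ hβ' hs
  simp only [smul_eq_mul] at haff
  obtain ⟨t₀, ht₀, habs⟩ := exists_notMem_forall_eq_abs_mul_abs_sub hm
    fun t ht => haff t ht ▸ Real.rpow_pos_of_pos (hpos t ht) (1 - c)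
  refine ⟨|m| ^ (1 / (1 - c)), t₀, by positivity, ht₀, fun t ht => ?_⟩
  calc α t = (α t ^ (1 - c)) ^ (1 / (1 - c)) := by
        rw [one_div, Real.rpow_rpow_inv (hpos t ht).le he]
    _ = (|m| * |t - t₀|) ^ (1 / (1 - c)) := by rw [haff t ht, habs t ht]
    _ = |m| ^ (1 / (1 - c)) * |t - t₀| ^ (1 / (1 - c)) :=
        Real.mul_rpow (abs_nonneg _) (abs_nonneg _)

theorem stmt13 (I : Set ℝ) (hne : I.Nonempty) (hopen : IsOpen I)
    (hconn : I.OrdConnected)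
    (c : ℝ) (hc : c ≠ 1)
    (α α' α'' : ℝ → ℝ)
    (hd1 : ∀ t ∈ I, HasDerivAt α (α' t) t)
    (hd2 : ∀ t ∈ I, HasDerivAt α' (α'' t) t)
    (hpos : ∀ t ∈ I, 0 < α t)
    (hne0 : ∀ t ∈ I, α' t ≠ 0)
    (hODE : ∀ t ∈ I, α t * α'' t = c * α' t ^ 2) :
    ∃ A t₀ : ℝ, 0 < A ∧ t₀ ∉ I ∧ ∀ t ∈ I, α t = A * |t - t₀| ^ (1 / (1 - c)) :=
  stmt13_general I hne hconn c hc α α' α'' hd1 hd2 hpos hne0 hODE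
end

section
/- Let c, a, u, K ∈ ℝ with c ≠ 0, c ≠ −1, and a ≠ 0, and suppose that −(a·y^{c+1}/(c+1) + u)·a·c·y^{c−1} = K·y^{2c} for all y > 0. Then u = 0 and K = −a²·c/(c+1). -/
/-! Multiplying out, the identity reads `(K + a²c/(c+1)) y^{2c} + u a c y^{c-1} = 0` on `(0, ∞)`.
Since `2c ≠ c - 1`, the two power functions are linearly independent there (evaluate at `y = 1`
and `y = 2`), so both coefficients vanish, and `a c ≠ 0` gives `u = 0`. -/

namespace Real

theorem eq_zero_and_eq_zero_of_forall_mul_rpow_add_mul_rpow {s t A B : ℝ} (hst : s ≠ t)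
    (h : ∀ y : ℝ, 0 < y → A * y ^ s + B * y ^ t = 0) : A = 0 ∧ B = 0 := by
  have h_one : A + B = 0 := by simpa using h 1 one_pos
  have h_two : A * ((2 : ℝ) ^ s - 2 ^ t) = 0 := by
    linear_combination h 2 two_pos - (2 : ℝ) ^ t * h_one
  have h_pow_ne : (2 : ℝ) ^ s - 2 ^ t ≠ 0 :=
    sub_ne_zero.2 fun h' => hst ((rpow_right_inj two_pos (by norm_num)).1 h')
  have hA : A = 0 := (mul_eq_zero.1 h_two).resolve_right h_pow_ne
  exact ⟨hA, by linarith⟩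

end Real

theorem neg_mul_rpow_div_add_mul_mul_rpow_eq {c a u y : ℝ} (hc1 : c ≠ -1) (hy : 0 < y) :
    -(a * y ^ (c + 1) / (c + 1) + u) * (a * c * y ^ (c - 1)) =
      -(a ^ 2 * c / (c + 1)) * y ^ (2 * c) - u * a * c * y ^ (c - 1) := by
  have hc1' : c + 1 ≠ 0 := fun h => hc1 (eq_neg_of_add_eq_zero_left h)
  have h_pow : y ^ (c + 1) * y ^ (c - 1) = y ^ (2 * c) := by
    rw [← Real.rpow_add hy]; ring_nf
  rw [← h_pow]
  field_simp
  ring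

theorem stmt17 (c a u K : ℝ) (hc0 : c ≠ 0) (hc1 : c ≠ -1) (ha : a ≠ 0)
    (h : ∀ y : ℝ, 0 < y →
      -(a * y ^ (c + 1) / (c + 1) + u) * (a * c * y ^ (c - 1)) = K * y ^ (2 * c)) :
    u = 0 ∧ K = -a ^ 2 * c / (c + 1) := by
  have h_exp_ne : 2 * c ≠ c - 1 := fun h' => hc1 (by linarith)
  obtain ⟨hK, hu⟩ := Real.eq_zero_and_eq_zero_of_forall_mul_rpow_add_mul_rpow h_exp_ne
    (A := K + a ^ 2 * c / (c + 1)) (B := u * a * c) fun y hy => by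
      linear_combination -(neg_mul_rpow_div_add_mul_mul_rpow_eq hc1 hy).symm.trans (h y hy)
  refine ⟨by simpa [ha, hc0] using hu, ?_⟩
  rw [neg_mul, neg_div]
  linarith
end

section
/- For every natural number k there exists a function α : ℝ → ℝ such that: (a) α is infinitely differentiable; (b) the k-th derivative of α is iteratedDeriv k α x = e^{−x²} for all x ∈ ℝ; (c) for every ℓ ≤ k and every x ∈ ℝ, the ℓ-th derivative satisfies iteratedDeriv ℓ α x > 0; (d) for every ℓ ≤ k and every x ≤ −1, iteratedDeriv ℓ α x ≤ e^{x}; and (e) the (k+1)-st derivative satisfies iteratedDeriv (k+1) α x = 0 if and only if x = 0. -/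
open MeasureTheory Set intervalIntegral

/-- An antiderivative of a function analytic on all of `ℝ` is analytic. -/
private lemma analyticAt_antideriv {α β : ℝ → ℝ}
    (hα : ∀ x, AnalyticAt ℝ α x) (hβ : ∀ x, HasDerivAt β (α x) x) (x₀ : ℝ) :
    AnalyticAt ℝ β x₀ := by
  obtain ⟨p, hp⟩ := hα x₀
  obtain ⟨r, hpr⟩ := hp
  obtain ⟨r', hr'0, hr'r⟩ := ENNReal.lt_iff_exists_nnreal_btwn.mp hpr.r_pos
  have hr'pos : (0 : ℝ) < r' := by exact_mod_cast hr'0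
  have hrad : (r' : ENNReal) < p.radius := lt_of_lt_of_le hr'r hpr.r_le
  have hsum' : Summable (fun n : ℕ => |p.coeff n| * (r' : ℝ) ^ n) := by
    simpa [Real.norm_eq_abs] using p.summable_norm_mul_pow hrad
  -- the series of `α` converges on the ball
  have hαsum : ∀ y ∈ Metric.ball x₀ (r' : ℝ),
      HasSum (fun n : ℕ => p.coeff n * (y - x₀) ^ n) (α y) := by
    intro y hy
    have h1 : ‖y - x₀‖₊ < r' := by
      rw [← NNReal.coe_lt_coe, coe_nnnorm, Real.norm_eq_abs]
      simpa [Real.dist_eq] using hy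
    have hmem : (y - x₀) ∈ EMetric.ball (0 : ℝ) r :=
      mem_emetric_ball_zero_iff.2 (lt_trans (ENNReal.coe_lt_coe.2 h1) hr'r)
    have h2 := hpr.hasSum hmem
    have h3 : x₀ + (y - x₀) = y := by ring
    rw [h3] at h2
    have h4 : (fun n : ℕ => p n fun _ => y - x₀)
        = fun n : ℕ => p.coeff n * (y - x₀) ^ n := by
      funext n
      rw [FormalMultilinearSeries.apply_eq_pow_smul_coeff, smul_eq_mul]
      ring
    rwa [h4] at h2
  -- the terms of the integrated series
  have hg : ∀ (n : ℕ) (y : ℝ),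
      HasDerivAt (fun z => p.coeff n / ((n : ℝ) + 1) * (z - x₀) ^ (n + 1))
        (p.coeff n * (y - x₀) ^ n) y := by
    intro n y
    have h1 : HasDerivAt (fun z : ℝ => (z - x₀) ^ (n + 1))
        ((((n : ℝ) + 1)) * (y - x₀) ^ n * 1) y := by
      have := ((hasDerivAt_id y).sub_const x₀).pow (n + 1)
      have h := (by simpa using this : HasDerivAt ((fun x : ℝ => x - x₀) ^ (n + 1)) (((n : ℝ) + 1) * (y - x₀) ^ n) y)
      rw [mul_one]
      exact h
    have h2 := h1.const_mul (p.coeff n / ((n : ℝ) + 1))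
    refine h2.congr_deriv ?_
    have hne : ((n : ℝ) + 1) ≠ 0 := by positivity
    rw [mul_one, ← mul_assoc, div_mul_cancel₀ _ hne]
  have hbound : ∀ (n : ℕ), ∀ y ∈ Metric.ball x₀ (r' : ℝ),
      ‖p.coeff n * (y - x₀) ^ n‖ ≤ |p.coeff n| * (r' : ℝ) ^ n := by
    intro n y hy
    have hy' : |y - x₀| ≤ (r' : ℝ) := le_of_lt (by simpa [Real.dist_eq] using hy)
    rw [Real.norm_eq_abs, abs_mul, abs_pow]
    gcongr
  set G : ℝ → ℝ := fun y => ∑' n : ℕ, p.coeff n / ((n : ℝ) + 1) * (y - x₀) ^ (n + 1)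
    with hGdef
  have hg0 : Summable (fun n : ℕ => p.coeff n / ((n : ℝ) + 1) * (x₀ - x₀) ^ (n + 1)) :=
    summable_zero.congr fun n => by simp
  have hG : ∀ y ∈ Metric.ball x₀ (r' : ℝ), HasDerivAt G (α y) y := by
    intro y hy
    have h := hasDerivAt_tsum_of_isPreconnected hsum' Metric.isOpen_ball
      (convex_ball x₀ (r' : ℝ)).isPreconnected (fun n z _ => hg n z)
      (fun n z hz => hbound n z hz) (Metric.mem_ball_self hr'pos) hg0 hy
    rwa [(hαsum y hy).tsum_eq] at h
  have hGx₀ : G x₀ = 0 := by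
    rw [hGdef]
    simp
  have hconst : ∀ y ∈ Metric.ball x₀ (r' : ℝ), β y - G y = β x₀ - G x₀ := by
    intro y hy
    have hdiff : DifferentiableOn ℝ (fun z => β z - G z) (Metric.ball x₀ (r' : ℝ)) :=
      fun z hz => ((hβ z).sub (hG z hz)).differentiableAt.differentiableWithinAt
    refine (convex_ball x₀ (r' : ℝ)).is_const_of_fderivWithin_eq_zero hdiff ?_ hy
      (Metric.mem_ball_self hr'pos)
    intro z hz
    have hD : HasDerivAt (fun z => β z - G z) 0 z := by
      have h := (hβ z).sub (hG z hz)
      rwa [sub_self] at h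
    have hD' : HasFDerivAt (fun z => β z - G z) (0 : ℝ →L[ℝ] ℝ) z := by
      have h := hD.hasFDerivAt
      rwa [ContinuousLinearMap.toSpanSingleton_zero] at h
    exact hD'.hasFDerivWithinAt.fderivWithin (Metric.isOpen_ball.uniqueDiffOn z hz)
  have hgsum : ∀ y ∈ Metric.ball x₀ (r' : ℝ),
      HasSum (fun n : ℕ => p.coeff n / ((n : ℝ) + 1) * (y - x₀) ^ (n + 1)) (G y) := by
    intro y hy
    apply Summable.hasSum
    refine Summable.of_norm_bounded (hsum'.mul_left (r' : ℝ)) ?_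
    intro n
    have hy' : |y - x₀| ≤ (r' : ℝ) := le_of_lt (by simpa [Real.dist_eq] using hy)
    have h1 : ‖p.coeff n / ((n : ℝ) + 1) * (y - x₀) ^ (n + 1)‖
        = |p.coeff n| / ((n : ℝ) + 1) * |y - x₀| ^ (n + 1) := by
      rw [Real.norm_eq_abs, abs_mul, abs_div, abs_pow, abs_of_pos (by positivity :
        (0 : ℝ) < (n : ℝ) + 1)]
    rw [h1]
    have h2 : |p.coeff n| / ((n : ℝ) + 1) ≤ |p.coeff n| :=
      div_le_self (abs_nonneg _) (le_add_of_nonneg_left n.cast_nonneg)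
    calc |p.coeff n| / ((n : ℝ) + 1) * |y - x₀| ^ (n + 1)
        ≤ |p.coeff n| * (r' : ℝ) ^ (n + 1) := by
          apply mul_le_mul h2 (pow_le_pow_left₀ (abs_nonneg _) hy' _) (by positivity)
            (abs_nonneg _)
      _ = (r' : ℝ) * (|p.coeff n| * (r' : ℝ) ^ n) := by ring
  -- build the power series for β
  set d : ℕ → ℝ := fun n => match n with
    | 0 => β x₀
    | (m + 1) => p.coeff m / ((m : ℝ) + 1) with hd
  set q : FormalMultilinearSeries ℝ ℝ ℝ :=
    fun n => ContinuousMultilinearMap.mkPiRing ℝ (Fin n) (d n) with hq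
  have hqcoeff : ∀ n, q.coeff n = d n := by
    intro n
    simp [hq, FormalMultilinearSeries.coeff]
  refine ⟨q, hasFPowerSeriesAt_iff'.mpr ?_⟩
  filter_upwards [Metric.ball_mem_nhds x₀ (by exact_mod_cast hr'0)] with y hy
  have hβy : β y = G y + β x₀ := by
    have h := hconst y hy
    rw [hGx₀] at h
    linarith
  rw [hβy]
  set F : ℕ → ℝ := fun n => (y - x₀) ^ n • q.coeff n with hF
  have h2 : HasSum (fun n => F (n + 1)) (G y) := by
    have h1 := hgsum y hy
    refine h1.congr_fun fun n => ?_
    rw [hF]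
    simp only [hqcoeff, smul_eq_mul]
    rw [hd]
    ring
  have h3 := (hasSum_nat_add_iff (f := F) 1).mp h2
  have h4 : ∑ i ∈ Finset.range 1, F i = β x₀ := by
    rw [hF]
    simp [hqcoeff, hd]
  rwa [h4] at h3

private lemma stmt18_aux (k : ℕ) : ∃ α : ℝ → ℝ, (∀ x, AnalyticAt ℝ α x) ∧
    (∀ x : ℝ, iteratedDeriv k α x = Real.exp (-x ^ 2)) ∧
    (∀ ℓ ≤ k, ∀ x : ℝ, 0 < iteratedDeriv ℓ α x) ∧
    (∀ ℓ ≤ k, ∀ x : ℝ, x ≤ -1 → iteratedDeriv ℓ α x ≤ Real.exp x) := by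
  induction k with
  | zero =>
    refine ⟨fun x => Real.exp (-x ^ 2), ?_, fun x => by simp, ?_, ?_⟩
    · intro x
      exact AnalyticAt.rexp ((analyticAt_id.pow 2).neg)
    · intro ℓ hℓ x
      interval_cases ℓ
      simpa using Real.exp_pos _
    · intro ℓ hℓ x hx
      interval_cases ℓ
      simp only [iteratedDeriv_zero]
      exact Real.exp_le_exp.2 (by nlinarith)
  | succ k ih =>
    obtain ⟨α, hA, hd, hp, hb⟩ := ih
    have hsmooth : ContDiff ℝ (⊤ : ℕ∞) α := AnalyticOnNhd.contDiff (fun x _ => hA x)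
    have hcont : Continuous α := hsmooth.continuous
    have hαpos : ∀ x, 0 < α x := fun x => by simpa using hp 0 (Nat.zero_le _) x
    have hαle : ∀ x ≤ (-1 : ℝ), α x ≤ Real.exp x := fun x hx => by
      simpa using hb 0 (Nat.zero_le _) x hx
    have hint : ∀ x : ℝ, IntegrableOn α (Iic x) := by
      have hI1 : IntegrableOn α (Iic (-1 : ℝ)) := by
        refine (integrableOn_exp_Iic (-1)).mono' hcont.aestronglyMeasurable.restrict ?_
        filter_upwards [ae_restrict_mem measurableSet_Iic] with t ht
        rw [Real.norm_eq_abs, abs_of_pos (hαpos t)]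
        exact hαle t ht
      intro x
      rcases le_total x (-1) with h | h
      · exact hI1.mono_set (Iic_subset_Iic.2 h)
      · rw [← Iic_union_Ioc_eq_Iic h]
        exact hI1.union (hcont.continuousOn.integrableOn_Icc.mono_set Ioc_subset_Icc_self)
    set β : ℝ → ℝ := fun x => ∫ t in Iic x, α t with hβ
    have hsplit : ∀ a x : ℝ, β x = β a + ∫ t in a..x, α t := by
      intro a x
      rw [hβ]
      have := integral_Iic_sub_Iic (μ := volume) (f := α) (hint a) (hint x)
      linarith [this]
    have hderiv : ∀ x : ℝ, HasDerivAt β (α x) x := by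
      intro x
      have h1 : HasDerivAt (fun y => ∫ t in (0:ℝ)..y, α t) (α x) x :=
        (hcont.integral_hasStrictDerivAt 0 x).hasDerivAt
      have h2 : HasDerivAt (fun y => β 0 + ∫ t in (0:ℝ)..y, α t) (α x) x :=
        h1.const_add _
      exact h2.congr_of_eventuallyEq (Filter.Eventually.of_forall fun y => hsplit 0 y)
    have hβA : ∀ x, AnalyticAt ℝ β x := analyticAt_antideriv hA hderiv
    have hβderiv : deriv β = α := funext fun x => (hderiv x).deriv
    have hiter : ∀ n : ℕ, iteratedDeriv (n + 1) β = iteratedDeriv n α := by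
      intro n
      rw [iteratedDeriv_succ', hβderiv]
    refine ⟨β, hβA, ?_, ?_, ?_⟩
    · intro x
      rw [hiter k]
      exact hd x
    · intro ℓ hℓ x
      cases ℓ with
      | zero =>
        simp only [iteratedDeriv_zero]
        have h1 : (0:ℝ) ≤ β (x - 1) :=
          setIntegral_nonneg measurableSet_Iic fun t _ => (hαpos t).le
        have h2 : 0 < ∫ t in (x-1)..x, α t :=
          intervalIntegral_pos_of_pos (hcont.intervalIntegrable _ _) hαpos
            (by linarith)
        have := hsplit (x - 1) x
        linarith
      | succ m =>
        rw [hiter m]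
        exact hp m (Nat.lt_succ_iff.mp hℓ) x
    · intro ℓ hℓ x hx
      cases ℓ with
      | zero =>
        simp only [iteratedDeriv_zero]
        calc β x ≤ ∫ t in Iic x, Real.exp t := by
              refine setIntegral_mono_on (hint x) (integrableOn_exp_Iic x)
                measurableSet_Iic fun t ht => hαle t (le_trans ht hx)
          _ = Real.exp x := integral_exp_Iic x
      | succ m =>
        rw [hiter m]
        exact hb m (Nat.lt_succ_iff.mp hℓ) x hx

theorem stmt18 (k : ℕ) :
    ∃ α : ℝ → ℝ, ContDiff ℝ (⊤ : ℕ∞) α ∧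
      (∀ x : ℝ, iteratedDeriv k α x = Real.exp (-x ^ 2)) ∧
      (∀ ℓ ≤ k, ∀ x : ℝ, 0 < iteratedDeriv ℓ α x) ∧
      (∀ ℓ ≤ k, ∀ x : ℝ, x ≤ -1 → iteratedDeriv ℓ α x ≤ Real.exp x) ∧
      (∀ x : ℝ, iteratedDeriv (k + 1) α x = 0 ↔ x = 0) := by
  obtain ⟨α, hA, hd, hp, hb⟩ := stmt18_aux k
  refine ⟨α, AnalyticOnNhd.contDiff (fun x _ => hA x), hd, hp, hb, ?_⟩
  intro x
  have hk : iteratedDeriv k α = fun x => Real.exp (-x ^ 2) := funext hd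
  have hder : HasDerivAt (fun x : ℝ => Real.exp (-x ^ 2))
      (Real.exp (-x ^ 2) * (-(2 * x ^ 1))) x :=
    ((hasDerivAt_pow 2 x).neg).exp
  have hval : iteratedDeriv (k + 1) α x = Real.exp (-x ^ 2) * (-(2 * x ^ 1)) := by
    rw [iteratedDeriv_succ, hk, hder.deriv]
  rw [hval]
  constructor
  · intro h
    rcases mul_eq_zero.mp h with h | h
    · exact absurd h (Real.exp_ne_zero _)
    · have hx1 : x ^ 1 = 0 := by
        rcases mul_eq_zero.mp (neg_eq_zero.mp h) with h' | h'
        · norm_num at h'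
        · exact h'
      simpa using hx1
  · intro h; simp [h]
end
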